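/- If A and all formulas of Γ contain no occurrence of → and ∀, and A has the form ¬B, then Γ ⊢_NK ¬B if and only if Γ ⊢_NM ¬B. -/

import Mathlib

/-! A classical derivation of `A` from `Γ` translates into a minimal derivation of `¬¬Aᵐ`
from `Γᵐ`: double negation is a monad already in minimal logic, every rule of NK read through
`(·)ᵐ` (which turns `A → B` into `¬A ∨ B` and `∀` into `¬∃¬`) is sound under it, and
reductio ad absurdum survives because `¬¬⊥ ⊢ ⊥` minimally. On →,∀-free formulas `(·)ᵐ` is
the identity, so a classical derivation of `¬B` yields a minimal one of `¬¬¬B`, hence of `¬B`. -/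

/-- First-order terms: variables (de Bruijn style indices for bound variables
are merged with free variable indices) and function symbols with arguments. -/
inductive Term where
  | var : ℕ → Term
  | fn : ℕ → (ℕ → Term) → Term

/-- Lift (shift by one) all variables ≥ k. -/
def Term.lift (k : ℕ) : Term → Term
  | .var n => .var (if n < k then n else n + 1)
  | .fn f a => .fn f (fun i => (a i).lift k)

/-- Capture-avoiding substitution of the term `s` for variable `k` (de Bruijn). -/
def Term.subst (k : ℕ) (s : Term) : Term → Term
  | .var n => if n < k then .var n else if n = k then s else .var (n - 1)
  | .fn f a => .fn f (fun i => Term.subst k s (a i))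

/-- Free variables of a term. -/
def Term.fv : Term → Set ℕ
  | .var n => {n}
  | .fn _ a => ⋃ i, (a i).fv

/-- First-order formulas with primitive negation, de Bruijn binders. -/
inductive Formula where
  | pred : ℕ → (ℕ → Term) → Formula
  | bot : Formula
  | top : Formula
  | neg : Formula → Formula
  | conj : Formula → Formula → Formula
  | disj : Formula → Formula → Formula
  | impl : Formula → Formula → Formula
  | all : Formula → Formula
  | ex : Formula → Formula

def Formula.lift (k : ℕ) : Formula → Formula
  | .pred r a => .pred r (fun i => (a i).lift k)
  | .bot => .bot
  | .top => .top
  | .neg A => .neg (A.lift k)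
  | .conj A B => .conj (A.lift k) (B.lift k)
  | .disj A B => .disj (A.lift k) (B.lift k)
  | .impl A B => .impl (A.lift k) (B.lift k)
  | .all A => .all (A.lift (k + 1))
  | .ex A => .ex (A.lift (k + 1))

/-- Capture-avoiding substitution of term `s` for variable `k` in a formula. -/
def Formula.subst (k : ℕ) (s : Term) : Formula → Formula
  | .pred r a => .pred r (fun i => Term.subst k s (a i))
  | .bot => .bot
  | .top => .top
  | .neg A => .neg (A.subst k s)
  | .conj A B => .conj (A.subst k s) (B.subst k s)
  | .disj A B => .disj (A.subst k s) (B.subst k s)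
  | .impl A B => .impl (A.subst k s) (B.subst k s)
  | .all A => .all (A.subst (k + 1) (s.lift 0))
  | .ex A => .ex (A.subst (k + 1) (s.lift 0))

/-- Free variables of a formula. -/
def Formula.fv : Formula → Set ℕ
  | .pred _ a => ⋃ i, (a i).fv
  | .bot => ∅
  | .top => ∅
  | .neg A => A.fv
  | .conj A B => A.fv ∪ B.fv
  | .disj A B => A.fv ∪ B.fv
  | .impl A B => A.fv ∪ B.fv
  | .all A => {n | n + 1 ∈ A.fv}
  | .ex A => {n | n + 1 ∈ A.fv}

/-- Object-level biconditional, as a defined connective. -/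
def Formula.fIff (A B : Formula) : Formula := .conj (.impl A B) (.impl B A)

/-- `A` contains no occurrence of the universal quantifier ∀. -/
def Formula.forallFree : Formula → Prop
  | .pred _ _ => True
  | .bot => True
  | .top => True
  | .neg A => A.forallFree
  | .conj A B => A.forallFree ∧ B.forallFree
  | .disj A B => A.forallFree ∧ B.forallFree
  | .impl A B => A.forallFree ∧ B.forallFree
  | .all _ => False
  | .ex A => A.forallFree

/-- `A` contains no occurrence of implication →. -/
def Formula.impFree : Formula → Prop
  | .pred _ _ => True
  | .bot => True
  | .top => True
  | .neg A => A.impFree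
  | .conj A B => A.impFree ∧ B.impFree
  | .disj A B => A.impFree ∧ B.impFree
  | .impl _ _ => False
  | .all A => A.impFree
  | .ex A => A.impFree

/-- The minimal translation (·)^m. -/
def Formula.mtr : Formula → Formula
  | .pred r a => .pred r a
  | .bot => .bot
  | .top => .top
  | .neg A => .neg A.mtr
  | .conj A B => .conj A.mtr B.mtr
  | .disj A B => .disj A.mtr B.mtr
  | .impl A B => .disj (.neg A.mtr) B.mtr
  | .all A => .neg (.ex (.neg A.mtr))
  | .ex A => .ex A.mtr

/-- The intuitionistic translation (·)^j. -/
def Formula.jtr : Formula → Formula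
  | .pred r a => .pred r a
  | .bot => .bot
  | .top => .top
  | .neg A => .neg A.jtr
  | .conj A B => .conj A.jtr B.jtr
  | .disj A B => .disj A.jtr B.jtr
  | .impl A B => .impl A.jtr B.jtr
  | .all A => .neg (.ex (.neg A.jtr))
  | .ex A => .ex A.jtr

/-- Negative formulas: built from negated atoms, ⊥, ⊤ using only ¬, ∧, →, ∀. -/
inductive Formula.Negative : Formula → Prop where
  | negAtom : ∀ r a, Formula.Negative (.neg (.pred r a))
  | bot : Formula.Negative .bot
  | top : Formula.Negative .top
  | neg : ∀ {A}, Formula.Negative A → Formula.Negative (.neg A)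
  | conj : ∀ {A B}, Formula.Negative A → Formula.Negative B → Formula.Negative (.conj A B)
  | impl : ∀ {A B}, Formula.Negative A → Formula.Negative B → Formula.Negative (.impl A B)
  | all : ∀ {A}, Formula.Negative A → Formula.Negative (.all A)

/-- Natural deduction derivability; the flags `efq`, `raa` tell whether the
ex falso quodlibet and reductio ad absurdum rules are available.  `Deriv efq raa Γ A`
means `A` is derivable with undischarged assumptions among `Γ`. -/
inductive Deriv (efq raa : Bool) : Set Formula → Formula → Prop where
  | hyp : ∀ {Γ A}, A ∈ Γ → Deriv efq raa Γ A
  | topI : ∀ {Γ}, Deriv efq raa Γ .top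
  | negI : ∀ {Γ A}, Deriv efq raa (insert A Γ) .bot → Deriv efq raa Γ (.neg A)
  | negE : ∀ {Γ A}, Deriv efq raa Γ (.neg A) → Deriv efq raa Γ A → Deriv efq raa Γ .bot
  | conjI : ∀ {Γ A B}, Deriv efq raa Γ A → Deriv efq raa Γ B → Deriv efq raa Γ (.conj A B)
  | conjE1 : ∀ {Γ A B}, Deriv efq raa Γ (.conj A B) → Deriv efq raa Γ A
  | conjE2 : ∀ {Γ A B}, Deriv efq raa Γ (.conj A B) → Deriv efq raa Γ B
  | disjI1 : ∀ {Γ A B}, Deriv efq raa Γ A → Deriv efq raa Γ (.disj A B)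
  | disjI2 : ∀ {Γ A B}, Deriv efq raa Γ B → Deriv efq raa Γ (.disj A B)
  | disjE : ∀ {Γ A B C}, Deriv efq raa Γ (.disj A B) → Deriv efq raa (insert A Γ) C →
      Deriv efq raa (insert B Γ) C → Deriv efq raa Γ C
  | implI : ∀ {Γ A B}, Deriv efq raa (insert A Γ) B → Deriv efq raa Γ (.impl A B)
  | implE : ∀ {Γ A B}, Deriv efq raa Γ (.impl A B) → Deriv efq raa Γ A → Deriv efq raa Γ B
  | allI : ∀ {Γ A}, Deriv efq raa (Formula.lift 0 '' Γ) A → Deriv efq raa Γ (.all A)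
  | allE : ∀ {Γ A} (t : Term), Deriv efq raa Γ (.all A) → Deriv efq raa Γ (A.subst 0 t)
  | exI : ∀ {Γ A} (t : Term), Deriv efq raa Γ (A.subst 0 t) → Deriv efq raa Γ (.ex A)
  | exE : ∀ {Γ A C}, Deriv efq raa Γ (.ex A) →
      Deriv efq raa (insert A (Formula.lift 0 '' Γ)) (C.lift 0) → Deriv efq raa Γ C
  | efqR : ∀ {Γ A}, efq = true → Deriv efq raa Γ .bot → Deriv efq raa Γ A
  | raaR : ∀ {Γ A}, raa = true → Deriv efq raa (insert (.neg A) Γ) .bot → Deriv efq raa Γ A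

/-- Minimal natural deduction. -/
def NM : Set Formula → Formula → Prop := Deriv false false
/-- Intuitionistic natural deduction. -/
def NJ : Set Formula → Formula → Prop := Deriv true false
/-- Classical natural deduction (minimal + reductio ad absurdum). -/
def NK : Set Formula → Formula → Prop := Deriv false true


namespace Deriv

variable {e r : Bool} {Γ Δ : Set Formula} {A B C : Formula}

theorem weaken (h : Deriv e r Γ A) (hs : Γ ⊆ Δ) : Deriv e r Δ A := by
  induction h generalizing Δ with
  | hyp hm => exact .hyp (hs hm)
  | topI => exact .topI
  | negI _ ih => exact .negI (ih (Set.insert_subset_insert hs))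
  | negE _ _ ih₁ ih₂ => exact .negE (ih₁ hs) (ih₂ hs)
  | conjI _ _ ih₁ ih₂ => exact .conjI (ih₁ hs) (ih₂ hs)
  | conjE1 _ ih => exact .conjE1 (ih hs)
  | conjE2 _ ih => exact .conjE2 (ih hs)
  | disjI1 _ ih => exact .disjI1 (ih hs)
  | disjI2 _ ih => exact .disjI2 (ih hs)
  | disjE _ _ _ ih₁ ih₂ ih₃ =>
    exact .disjE (ih₁ hs) (ih₂ (Set.insert_subset_insert hs)) (ih₃ (Set.insert_subset_insert hs))
  | implI _ ih => exact .implI (ih (Set.insert_subset_insert hs))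
  | implE _ _ ih₁ ih₂ => exact .implE (ih₁ hs) (ih₂ hs)
  | allI _ ih => exact .allI (ih (Set.image_mono hs))
  | allE t _ ih => exact .allE t (ih hs)
  | exI t _ ih => exact .exI t (ih hs)
  | exE _ _ ih₁ ih₂ => exact .exE (ih₁ hs) (ih₂ (Set.insert_subset_insert (Set.image_mono hs)))
  | efqR he _ ih => exact .efqR he (ih hs)
  | raaR hr _ ih => exact .raaR hr (ih (Set.insert_subset_insert hs))

theorem mono {e' r' : Bool} (he : e = true → e' = true) (hr : r = true → r' = true)
    (h : Deriv e r Γ A) : Deriv e' r' Γ A := by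
  induction h with
  | hyp hm => exact .hyp hm
  | topI => exact .topI
  | negI _ ih => exact .negI ih
  | negE _ _ ih₁ ih₂ => exact .negE ih₁ ih₂
  | conjI _ _ ih₁ ih₂ => exact .conjI ih₁ ih₂
  | conjE1 _ ih => exact .conjE1 ih
  | conjE2 _ ih => exact .conjE2 ih
  | disjI1 _ ih => exact .disjI1 ih
  | disjI2 _ ih => exact .disjI2 ih
  | disjE _ _ _ ih₁ ih₂ ih₃ => exact .disjE ih₁ ih₂ ih₃
  | implI _ ih => exact .implI ih
  | implE _ _ ih₁ ih₂ => exact .implE ih₁ ih₂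
  | allI _ ih => exact .allI ih
  | allE t _ ih => exact .allE t ih
  | exI t _ ih => exact .exI t ih
  | exE _ _ ih₁ ih₂ => exact .exE ih₁ ih₂
  | efqR hefq _ ih => exact .efqR (he hefq) ih
  | raaR hraa _ ih => exact .raaR (hr hraa) ih

theorem assume : Deriv e r (insert A Γ) A := .hyp (Set.mem_insert _ _)

theorem assume₂ : Deriv e r (insert B (insert A Γ)) A :=
  .hyp (Set.mem_insert_of_mem _ (Set.mem_insert _ _))

theorem weaken_insert (h : Deriv e r Γ A) : Deriv e r (insert B Γ) A :=
  h.weaken (Set.subset_insert _ _)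

theorem negNeg_intro (h : Deriv e r Γ A) : Deriv e r Γ (.neg (.neg A)) :=
  .negI (.negE assume h.weaken_insert)

theorem bot_of_negNeg (h : Deriv e r Γ (.neg (.neg .bot))) : Deriv e r Γ .bot :=
  h.negE (.negI assume)

theorem neg_of_negNegNeg (h : Deriv e r Γ (.neg (.neg (.neg A)))) : Deriv e r Γ (.neg A) :=
  .negI (.negE h.weaken_insert (negNeg_intro assume))

theorem negNeg_bind (h : Deriv e r Γ (.neg (.neg A)))
    (k : Deriv e r (insert A Γ) (.neg (.neg C))) : Deriv e r Γ (.neg (.neg C)) :=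
  .negI <| .negE h.weaken_insert <| .negI <|
    .negE (k.weaken (Set.insert_subset_insert (Set.subset_insert _ _))) assume₂

theorem negNeg_map (h : Deriv e r Γ (.neg (.neg A))) (k : Deriv e r (insert A Γ) C) :
    Deriv e r Γ (.neg (.neg C)) :=
  h.negNeg_bind k.negNeg_intro

theorem negNeg_map₂ (hA : Deriv e r Γ (.neg (.neg A))) (hB : Deriv e r Γ (.neg (.neg B)))
    (k : Deriv e r (insert B (insert A Γ)) C) : Deriv e r Γ (.neg (.neg C)) :=
  hA.negNeg_bind (hB.weaken_insert.negNeg_map k)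

theorem negNeg_disj_neg_intro (h : Deriv e r (insert A Γ) (.neg (.neg B))) :
    Deriv e r Γ (.neg (.neg (.disj (.neg A) B))) :=
  .negI <| .negE assume <| .disjI1 <| .negI <|
    .negE (h.weaken (Set.insert_subset_insert (Set.subset_insert _ _)))
      (.negI (.negE assume₂.weaken_insert (.disjI2 assume)))

theorem negNeg_disj_neg_elim (h : Deriv e r Γ (.neg (.neg (.disj (.neg A) B))))
    (hA : Deriv e r Γ (.neg (.neg A))) : Deriv e r Γ (.neg (.neg B)) :=
  h.negNeg_bind <| .disjE assume
    (.negI (.negE hA.weaken_insert.weaken_insert.weaken_insert assume₂))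
    (negNeg_intro assume)

theorem neg_ex_neg_intro (h : Deriv e r (Formula.lift 0 '' Γ) (.neg (.neg A))) :
    Deriv e r Γ (.neg (.ex (.neg A))) :=
  .negI <| .exE assume <|
    .negE (h.weaken ((Set.image_mono (Set.subset_insert _ _)).trans (Set.subset_insert _ _)))
      assume

theorem neg_ex_neg_elim (t : Term) (h : Deriv e r Γ (.neg (.ex (.neg A)))) :
    Deriv e r Γ (.neg (.neg (A.subst 0 t))) :=
  .negI (.negE h.weaken_insert (.exI t assume))

theorem negNeg_ex_elim (h : Deriv e r Γ (.neg (.neg (.ex A))))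
    (k : Deriv e r (insert A (Formula.lift 0 '' Γ)) (.neg (.neg (C.lift 0)))) :
    Deriv e r Γ (.neg (.neg C)) :=
  h.negNeg_bind <| .exE assume <|
    k.weaken (Set.insert_subset_insert (Set.image_mono (Set.subset_insert _ _)))

end Deriv

namespace Formula

theorem mtr_lift (A : Formula) (k : ℕ) : (A.lift k).mtr = A.mtr.lift k := by
  induction A generalizing k <;> simp [lift, mtr, *]

theorem mtr_subst (A : Formula) (k : ℕ) (t : Term) : (A.subst k t).mtr = A.mtr.subst k t := by
  induction A generalizing k t <;> simp [subst, mtr, *]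

theorem image_mtr_image_lift (Γ : Set Formula) (k : ℕ) :
    mtr '' (lift k '' Γ) = lift k '' (mtr '' Γ) :=
  Set.image_comm fun A => mtr_lift A k

theorem mtr_eq_self {A : Formula} (h₁ : A.forallFree) (h₂ : A.impFree) : A.mtr = A := by
  induction A <;> simp_all [mtr, forallFree, impFree]

end Formula

theorem NK.negNeg_mtr {Γ : Set Formula} {A : Formula} (h : NK Γ A) :
    NM (Formula.mtr '' Γ) (.neg (.neg A.mtr)) := by
  induction h with
  | hyp hm => exact .negNeg_intro (.hyp (Set.mem_image_of_mem _ hm))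
  | topI => exact .negNeg_intro .topI
  | negI _ ih =>
    rw [Set.image_insert_eq] at ih
    exact .negNeg_intro (.negI ih.bot_of_negNeg)
  | negE _ _ ih₁ ih₂ => exact ih₁.negNeg_map₂ ih₂ (.negE .assume₂ .assume)
  | conjI _ _ ih₁ ih₂ => exact ih₁.negNeg_map₂ ih₂ (.conjI .assume₂ .assume)
  | conjE1 _ ih => exact ih.negNeg_map (.conjE1 .assume)
  | conjE2 _ ih => exact ih.negNeg_map (.conjE2 .assume)
  | disjI1 _ ih => exact ih.negNeg_map (.disjI1 .assume)
  | disjI2 _ ih => exact ih.negNeg_map (.disjI2 .assume)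
  | disjE _ _ _ ih₁ ih₂ ih₃ =>
    rw [Set.image_insert_eq] at ih₂ ih₃
    exact ih₁.negNeg_bind (.disjE .assume
      (ih₂.weaken (Set.insert_subset_insert (Set.subset_insert _ _)))
      (ih₃.weaken (Set.insert_subset_insert (Set.subset_insert _ _))))
  | implI _ ih =>
    rw [Set.image_insert_eq] at ih
    exact .negNeg_disj_neg_intro ih
  | implE _ _ ih₁ ih₂ => exact ih₁.negNeg_disj_neg_elim ih₂
  | allI _ ih =>
    rw [Formula.image_mtr_image_lift] at ih
    exact .negNeg_intro (.neg_ex_neg_intro ih)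
  | allE t _ ih =>
    rw [Formula.mtr_subst]
    exact ih.neg_of_negNegNeg.neg_ex_neg_elim t
  | exI t _ ih =>
    rw [Formula.mtr_subst] at ih
    exact ih.negNeg_map (.exI t .assume)
  | exE _ _ ih₁ ih₂ =>
    rw [Set.image_insert_eq, Formula.image_mtr_image_lift, Formula.mtr_lift] at ih₂
    exact ih₁.negNeg_ex_elim ih₂
  | efqR he => exact absurd he Bool.false_ne_true
  | raaR _ _ ih =>
    rw [Set.image_insert_eq] at ih
    exact .negI ih.bot_of_negNeg

/-- For negated formulas in the →,∀-free fragment, classical and minimal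
derivability coincide. -/
theorem glivenko_minimal_neg (Γ : Set Formula) (B : Formula)
    (hB : (Formula.neg B).forallFree ∧ (Formula.neg B).impFree)
    (hΓ : ∀ C ∈ Γ, C.forallFree ∧ C.impFree) :
    NK Γ (.neg B) ↔ NM Γ (.neg B) := by
  refine ⟨fun h => ?_, Deriv.mono (fun h => h) (fun _ => rfl)⟩
  have hΓm : Formula.mtr '' Γ = Γ := by
    rw [← Set.image_id Γ, Set.image_image]
    exact Set.image_congr fun C hC => Formula.mtr_eq_self (hΓ C hC).1 (hΓ C hC).2
  have h₃ := h.negNeg_mtr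
  rw [hΓm, Formula.mtr_eq_self hB.1 hB.2] at h₃
  exact Deriv.neg_of_negNegNeg h₃
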